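/- Let X be a virtual superspace over a field k. For g ∈ E and an element of pt_∞(X) represented by x ∈ pt_n(X), set g•[x] := î_j( X(π_j ∘ g ∘ i_n)(x) ) for any j with range(g) ⊆ ∧(j). Then this value is well defined (independent of the choice of j and of the representative x of the equivalence class), and the resulting map E × pt_∞(X) → pt_∞(X) is a semigroup action: (g∘h)•κ = g•(h•κ) for all g, h ∈ E and κ ∈ pt_∞(X). -/

import Mathlib

open ExteriorAlgebra CategoryTheory

/-- The Grassmann algebra `∧(n)` over `k`: the exterior algebra of `k^n`. -/
noncomputable abbrev Grassmann (k : Type) [Field k] (n : ℕ) : Type :=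
  ExteriorAlgebra k (Fin n → k)

/-- The ℤ/2-grading of the Grassmann algebra by even and odd exterior degrees. -/
noncomputable def grassGrade (k : Type) [Field k] (n : ℕ) (i : ZMod 2) :
    Submodule k (Grassmann k n) :=
  CliffordAlgebra.evenOdd (0 : QuadraticForm k (Fin n → k)) i

/-- A unital algebra homomorphism between Grassmann algebras is parity-preserving if it
maps even elements to even elements and odd elements to odd elements. -/
def IsParityHom {k : Type} [Field k] {p q : ℕ} (φ : Grassmann k p →ₐ[k] Grassmann k q) :
    Prop :=
  ∀ (i : ZMod 2) (x : Grassmann k p), x ∈ grassGrade k p i → φ x ∈ grassGrade k q i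

/-- The category `𝒢`: objects are natural numbers `n` (standing for the Grassmann algebra
`∧(n)`), morphisms `n ⟶ m` are the parity-preserving unital `k`-algebra homomorphisms
`∧(n) → ∧(m)`. -/
structure GrassCat (k : Type) [Field k] : Type where
  n : ℕ

variable {k : Type} [Field k]

instance : Category (GrassCat k) where
  Hom a b := {φ : Grassmann k a.n →ₐ[k] Grassmann k b.n // IsParityHom φ}
  id a := ⟨AlgHom.id k _, fun _ _ hx => hx⟩
  comp f g := ⟨g.1.comp f.1, fun i x hx => g.2 i _ (f.2 i x hx)⟩
  id_comp f := Subtype.ext (AlgHom.comp_id _)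
  comp_id f := Subtype.ext (AlgHom.id_comp _)
  assoc f g h := Subtype.ext (AlgHom.comp_assoc _ _ _).symm

/-- The Grassmann algebra `∧(∞)` of infinite (countable) rank: the exterior algebra of
the vector space `ℕ →₀ k` with countable basis `ξ₁, ξ₂, …`. -/
noncomputable abbrev GrassmannInf (k : Type) [Field k] : Type :=
  ExteriorAlgebra k (ℕ →₀ k)

private lemma pow_mono {A : Type} [Semiring A] [Algebra k A] {M N : Submodule k A}
    (h : M ≤ N) : ∀ j : ℕ, M ^ j ≤ N ^ j
  | 0 => le_rfl
  | j + 1 => by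
      rw [pow_succ, pow_succ]
      exact mul_le_mul' (pow_mono h j) h

/-- The functorial map between exterior algebras preserves the ℤ/2-grading. -/
lemma map_parity {M N : Type} [AddCommGroup M] [Module k M] [AddCommGroup N] [Module k N]
    (f : M →ₗ[k] N) (i : ZMod 2) (x : ExteriorAlgebra k M)
    (hx : x ∈ CliffordAlgebra.evenOdd (0 : QuadraticForm k M) i) :
    ExteriorAlgebra.map f x ∈ CliffordAlgebra.evenOdd (0 : QuadraticForm k N) i := by
  have hle : CliffordAlgebra.evenOdd (0 : QuadraticForm k M) i ≤
      Submodule.comap (ExteriorAlgebra.map f).toLinearMap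
        (CliffordAlgebra.evenOdd (0 : QuadraticForm k N) i) := by
    rw [CliffordAlgebra.evenOdd]
    apply iSup_le
    rintro ⟨j, hj⟩
    rw [← Submodule.map_le_iff_le_comap]
    rw [Submodule.map_pow]
    refine le_trans (pow_mono ?_ (j : ℕ))
      (le_iSup (fun j : {n : ℕ // (↑n : ZMod 2) = i} =>
        LinearMap.range (CliffordAlgebra.ι (0 : QuadraticForm k N)) ^ (j : ℕ)) ⟨j, hj⟩)
    rintro y ⟨z, ⟨m, rfl⟩, rfl⟩
    exact ⟨f m, (ExteriorAlgebra.map_apply_ι f m).symm⟩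
  exact hle hx

/-- The embedding `k^n → (ℕ →₀ k)` sending the `t`-th standard basis vector to `ξ_t`. -/
noncomputable def embV (k : Type) [Field k] (n : ℕ) : (Fin n → k) →ₗ[k] (ℕ →₀ k) where
  toFun x := ∑ t : Fin n, Finsupp.single (t : ℕ) (x t)
  map_add' x y := by simp [Finsupp.single_add, Finset.sum_add_distrib]
  map_smul' c x := by simp [Finsupp.smul_single, Finset.smul_sum]

/-- The projection `(ℕ →₀ k) → k^n`, sending `ξ_t` to `ξ_t` for `t < n` and to `0`
otherwise. -/
noncomputable def restV (k : Type) [Field k] (n : ℕ) : (ℕ →₀ k) →ₗ[k] (Fin n → k) where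
  toFun f t := f (t : ℕ)
  map_add' f g := by funext t; simp
  map_smul' c f := by funext t; simp

/-- The standard embedding `i_n : ∧(n) → ∧(∞)`. -/
noncomputable def iEmb (k : Type) [Field k] (n : ℕ) :
    Grassmann k n →ₐ[k] GrassmannInf k :=
  ExteriorAlgebra.map (embV k n)

/-- The canonical retraction `π_n : ∧(∞) → ∧(n)`, with `ξ_t ↦ ξ_t` for `t ≤ n` and
`ξ_t ↦ 0` for `t > n`. -/
noncomputable def piProj (k : Type) [Field k] (n : ℕ) :
    GrassmannInf k →ₐ[k] Grassmann k n :=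
  ExteriorAlgebra.map (restV k n)

/-- The linear embedding `k^n → k^m` (for `n ≤ m`) onto the first `n` coordinates. -/
noncomputable def inclV (k : Type) [Field k] (n m : ℕ) : (Fin n → k) →ₗ[k] (Fin m → k) where
  toFun x t := if h : (t : ℕ) < n then x ⟨t, h⟩ else 0
  map_add' x y := by
    funext t
    by_cases h : (t : ℕ) < n <;> simp [h]
  map_smul' c x := by
    funext t
    by_cases h : (t : ℕ) < n <;> simp [h]

/-- The standard embedding `i_{n,m} : ∧(n) → ∧(m)` (`n ≤ m`), as a morphism of `𝒢`. -/
noncomputable def inclHom (k : Type) [Field k] (n m : ℕ) (_h : n ≤ m) :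
    (⟨n⟩ : GrassCat k) ⟶ (⟨m⟩ : GrassCat k) :=
  ⟨ExteriorAlgebra.map (inclV k n m), fun i x hx => map_parity (inclV k n m) i x hx⟩

section PtInf

variable (k)

/-- One step of the direct system `pt₀(X) → pt₁(X) → ⋯` along the standard embeddings:
`x` is related to its image under `X(i_{n,m})`. -/
def PtRel (X : GrassCat k ⥤ Type) :
    (Σ n : ℕ, X.obj ⟨n⟩) → (Σ n : ℕ, X.obj ⟨n⟩) → Prop :=
  fun a b => ∃ h : a.1 ≤ b.1, X.map (inclHom k a.1 b.1 h) a.2 = b.2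

/-- `pt_∞(X)`: the direct limit (colimit) of the system `pt₀(X) → pt₁(X) → ⋯` of sets,
along the maps `X(i_{n,m})`. -/
def PtInf (X : GrassCat k ⥤ Type) : Type :=
  Quot (PtRel k X)

/-- The canonical map `î_n : pt_n(X) → pt_∞(X)` into the direct limit. -/
def iHat (X : GrassCat k ⥤ Type) (n : ℕ) (x : X.obj ⟨n⟩) : PtInf k X :=
  Quot.mk _ ⟨n, x⟩

end PtInf

/-- Parity preservation for an endomorphism of `∧(∞)`. -/
def InfParity (g : GrassmannInf k →ₐ[k] GrassmannInf k) : Prop :=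
  ∀ (i : ZMod 2) (x : GrassmannInf k),
    x ∈ CliffordAlgebra.evenOdd (0 : QuadraticForm k (ℕ →₀ k)) i →
    g x ∈ CliffordAlgebra.evenOdd (0 : QuadraticForm k (ℕ →₀ k)) i

/-- `g` has range contained in `∧(j)`, i.e. `g = i_j ∘ π_j ∘ g`. -/
def FinSupported (g : GrassmannInf k →ₐ[k] GrassmannInf k) (j : ℕ) : Prop :=
  (iEmb k j).comp ((piProj k j).comp g) = g

/-- The semigroup `E` of all parity-preserving unital algebra endomorphisms of `∧(∞)`
with finite-dimensional range (i.e. factoring through some `∧(j)`). -/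
def ESemi (k : Type) [Field k] : Type :=
  {g : GrassmannInf k →ₐ[k] GrassmannInf k // InfParity g ∧ ∃ j, FinSupported g j}

noncomputable instance : Mul (ESemi k) :=
  ⟨fun a b =>
    ⟨a.1.comp b.1,
      fun i x hx => a.2.1 i _ (b.2.1 i x hx),
      by
        obtain ⟨j, hj⟩ := a.2.2
        refine ⟨j, ?_⟩
        unfold FinSupported at hj ⊢
        rw [← AlgHom.comp_assoc, ← AlgHom.comp_assoc, AlgHom.comp_assoc (iEmb k j), hj]⟩⟩

noncomputable instance : Semigroup (ESemi k) where
  mul_assoc a b c := Subtype.ext (AlgHom.comp_assoc _ _ _).symm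

/-- The morphism `π_j ∘ g ∘ i_n : ∧(n) → ∧(j)` of `𝒢` determined by `g ∈ E`. -/
noncomputable def actHom (g : ESemi k) (n j : ℕ) :
    (⟨n⟩ : GrassCat k) ⟶ (⟨j⟩ : GrassCat k) :=
  ⟨(piProj k j).comp (g.1.comp (iEmb k n)),
    fun i x hx =>
      map_parity (restV k j) i _ (g.2.1 i _ (map_parity (embV k n) i x hx))⟩

/-! For `g ∈ E` with range in `∧(j)`, the morphisms `π_j ∘ g ∘ i_n` are compatible with the
direct system on both sides: precomposing with `i_{n,m}` gives `π_j ∘ g ∘ i_n` because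
`i_m ∘ i_{n,m} = i_n`, and postcomposing with `i_{j,j'}` gives `π_{j'} ∘ g ∘ i_n` because
`π_{j'} ∘ i_j = i_{j,j'}` and `g = i_j ∘ π_j ∘ g`. So `g•[x]` depends neither on the
representative nor on `j`. Writing `h = i_{j'} ∘ π_{j'} ∘ h` factors
`π_j ∘ gh ∘ i_n = (π_j ∘ g ∘ i_{j'}) ∘ (π_{j'} ∘ h ∘ i_n)`, and functoriality of `X` gives
`(gh)•κ = g•(h•κ)`. -/

lemma embV_single (n : ℕ) (t : Fin n) (c : k) :
    embV k n (Pi.single t c) = Finsupp.single (t : ℕ) c := by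
  simp only [embV, LinearMap.coe_mk, AddHom.coe_mk, Pi.single_apply]
  rw [Finset.sum_eq_single t (fun s _ hs => by simp [hs]) (by simp)]
  simp

lemma inclV_single {n m : ℕ} (h : n ≤ m) (t : Fin n) (c : k) :
    inclV k n m (Pi.single t c) = Pi.single (Fin.castLE h t) c := by
  funext s
  by_cases hs : (s : ℕ) < n
  · simp [inclV, hs, Pi.single_apply, Fin.ext_iff]
  · simp [inclV, hs, Pi.single_apply, Fin.ext_iff]
    omega

lemma restV_comp_embV (n m : ℕ) :
    (restV k m).comp (embV k n) = inclV k n m := by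
  ext t s
  simp only [LinearMap.comp_apply, LinearMap.coe_single, embV_single]
  by_cases hs : (s : ℕ) < n
  · simp [restV, inclV, hs, Pi.single_apply, Finsupp.single_apply, Fin.ext_iff, eq_comm]
  · simp [restV, inclV, hs, Finsupp.single_apply]
    omega

lemma embV_comp_inclV {n m : ℕ} (h : n ≤ m) :
    (embV k m).comp (inclV k n m) = embV k n := by
  ext t : 2
  simp [inclV_single h, embV_single]

lemma piProj_comp_iEmb (n m : ℕ) :
    (piProj k m).comp (iEmb k n) = ExteriorAlgebra.map (inclV k n m) := by
  rw [piProj, iEmb, ExteriorAlgebra.map_comp_map, restV_comp_embV]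

lemma iEmb_comp_map_inclV {n m : ℕ} (h : n ≤ m) :
    (iEmb k m).comp (ExteriorAlgebra.map (inclV k n m)) = iEmb k n := by
  rw [iEmb, iEmb, ExteriorAlgebra.map_comp_map, embV_comp_inclV h]

lemma FinSupported.comp {g : GrassmannInf k →ₐ[k] GrassmannInf k} {j : ℕ}
    (hg : FinSupported g j) (h : GrassmannInf k →ₐ[k] GrassmannInf k) :
    FinSupported (g.comp h) j := by
  unfold FinSupported at hg ⊢
  rw [← AlgHom.comp_assoc (piProj k j), ← AlgHom.comp_assoc (iEmb k j), hg]

lemma inclHom_comp_actHom {n m : ℕ} (h : n ≤ m) (g : ESemi k) (j : ℕ) :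
    inclHom k n m h ≫ actHom g m j = actHom g n j := by
  apply Subtype.ext
  change ((piProj k j).comp (g.1.comp (iEmb k m))).comp
    (ExteriorAlgebra.map (inclV k n m)) = (piProj k j).comp (g.1.comp (iEmb k n))
  rw [AlgHom.comp_assoc, AlgHom.comp_assoc, iEmb_comp_map_inclV h]

lemma actHom_comp_inclHom {g : ESemi k} {j j' : ℕ} (hg : FinSupported g.1 j) (h : j ≤ j')
    (n : ℕ) : actHom g n j ≫ inclHom k j j' h = actHom g n j' := by
  apply Subtype.ext
  change (ExteriorAlgebra.map (inclV k j j')).comp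
    ((piProj k j).comp (g.1.comp (iEmb k n))) = (piProj k j').comp (g.1.comp (iEmb k n))
  conv_rhs => rw [← hg]
  simp only [← piProj_comp_iEmb j j', AlgHom.comp_assoc]

lemma actHom_mul (g : ESemi k) {h : ESemi k} {jh : ℕ} (hh : FinSupported h.1 jh) (n j : ℕ) :
    actHom (g * h) n j = actHom h n jh ≫ actHom g jh j := by
  apply Subtype.ext
  change (piProj k j).comp ((g.1.comp h.1).comp (iEmb k n)) =
    ((piProj k j).comp (g.1.comp (iEmb k jh))).comp
      ((piProj k jh).comp (h.1.comp (iEmb k n)))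
  conv_lhs => rw [← hh]
  simp only [AlgHom.comp_assoc]

section Action

variable (X : GrassCat k ⥤ Type)

lemma iHat_map_inclHom {n m : ℕ} (h : n ≤ m) (x : X.obj ⟨n⟩) :
    iHat k X m (X.map (inclHom k n m h) x) = iHat k X n x :=
  (Quot.sound ⟨h, rfl⟩).symm

lemma PtInf.ind {p : PtInf k X → Prop} (hp : ∀ n x, p (iHat k X n x)) (κ : PtInf k X) : p κ :=
  Quot.ind (fun a => hp a.1 a.2) κ

lemma iHat_map_actHom_eq {g : ESemi k} {j j' : ℕ} (hj : FinSupported g.1 j)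
    (hj' : FinSupported g.1 j') (n : ℕ) (x : X.obj ⟨n⟩) :
    iHat k X j (X.map (actHom g n j) x) = iHat k X j' (X.map (actHom g n j') x) := by
  have through_max : ∀ {i}, FinSupported g.1 i → i ≤ max j j' →
      iHat k X i (X.map (actHom g n i) x) =
        iHat k X (max j j') (X.map (actHom g n (max j j')) x) :=
    fun hi hle => by
      rw [← iHat_map_inclHom X hle, ← Functor.map_comp_apply, actHom_comp_inclHom hi]
  rw [through_max hj (le_max_left j j'), through_max hj' (le_max_right j j')]

noncomputable def ptInfAct (g : ESemi k) : PtInf k X → PtInf k X :=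
  Quot.lift (fun a => iHat k X g.2.2.choose (X.map (actHom g a.1 g.2.2.choose) a.2))
    (by
      rintro ⟨n, x⟩ ⟨m, y⟩ ⟨h, hy⟩
      dsimp only at h hy ⊢
      rw [← hy, ← Functor.map_comp_apply, inclHom_comp_actHom])

lemma ptInfAct_iHat (g : ESemi k) (n : ℕ) (x : X.obj ⟨n⟩) {j : ℕ} (hj : FinSupported g.1 j) :
    ptInfAct X g (iHat k X n x) = iHat k X j (X.map (actHom g n j) x) :=
  iHat_map_actHom_eq X g.2.2.choose_spec hj n x

lemma ptInfAct_mul (g h : ESemi k) (κ : PtInf k X) :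
    ptInfAct X (g * h) κ = ptInfAct X g (ptInfAct X h κ) := by
  induction κ using PtInf.ind with
  | hp n x =>
    obtain ⟨jh, hjh⟩ := h.2.2
    obtain ⟨jg, hjg⟩ := g.2.2
    rw [ptInfAct_iHat X (g * h) n x (hjg.comp h.1), ptInfAct_iHat X h n x hjh,
      ptInfAct_iHat X g jh _ hjg, actHom_mul g hjh, Functor.map_comp_apply]

end Action

/-- The canonical action of the semigroup `E` on `pt_∞(X)`: the rule
`g•[x] = î_j(X(π_j ∘ g ∘ i_n)(x))` (for `x ∈ pt_n(X)` and any `j` with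
`range(g) ⊆ ∧(j)`) is well defined — independent of `j` and of the representative `x` —
and defines a semigroup action: `(g∘h)•κ = g•(h•κ)`. -/
theorem stmt13 (X : GrassCat k ⥤ Type) :
    ∃ act : ESemi k → PtInf k X → PtInf k X,
      (∀ (g : ESemi k) (n : ℕ) (x : X.obj ⟨n⟩) (j : ℕ),
        FinSupported g.1 j →
        act g (iHat k X n x) = iHat k X j (X.map (actHom g n j) x)) ∧
      (∀ (g h : ESemi k) (κ : PtInf k X), act (g * h) κ = act g (act h κ)) :=
  ⟨ptInfAct X, fun g n x _ hj => ptInfAct_iHat X g n x hj, ptInfAct_mul X⟩
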